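/- Let a : [0,T] → ℝ^{d×d} be given by a(t) = Σ_k Σ_{ν∈Δ^k} Γ^k(μ(t),ν) e_ν e_ν', where each Γ^k(μ(t),ν) ≥ 0 and each e_ν satisfies e_ν · 1 = 0. Suppose there is a subset Δ* ⊆ ∪_k Δ^k with Sp{e_ν : ν∈Δ*} = V_{d-1} and κ(T) := inf_{ν∈Δ*} inf_{0≤t≤T} Γ^{k_ν}(μ(t),ν) > 0. Let Q be an orthogonal matrix whose last column is (1/√d)·1 and define α(t) as the upper-left (d-1)×(d-1) block of Q'a(t)Q. Then there exists C(T) > 0 such that x'α(t)x ≥ C(T)‖x‖² for all x ∈ ℝ^{d-1} and all t ∈ [0,T]. -/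

import Mathlib

/-!
Put `v = Q (x, 0)`. As `Q` is orthogonal and `𝟙` is proportional to its last column, `v` lies in
the zero-sum hyperplane `V`, has the length of `x`, and `x'α(t)x = v'a(t)v = ∑_ν c(t,ν) (e_ν·v)²`.
Dropping the terms outside `Δ*` and bounding the remaining rates below by `κ` leaves
`κ ∑_{ν∈Δ*} (e_ν·v)²`. Since the `e_ν`, `ν ∈ Δ*`, span `V`, the map `v ↦ (e_ν·v)_{ν∈Δ*}` is
injective on the finite-dimensional space `V`, hence bounded below there.
-/

open scoped RealInnerProductSpace

theorem exists_pos_mul_norm_sq_le_sum_inner_sq {E ι : Type*} [NormedAddCommGroup E]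
    [InnerProductSpace ℝ E] (e : ι → E) (s : Finset ι) :
    ∃ C > 0, ∀ v ∈ Submodule.span ℝ (e '' s), C * ‖v‖ ^ 2 ≤ ∑ ν ∈ s, ⟪e ν, v⟫ ^ 2 := by
  set W := Submodule.span ℝ (e '' s)
  have : FiniteDimensional ℝ W := FiniteDimensional.span_of_finite ℝ (s.finite_toSet.image e)
  let f : W →ₗ[ℝ] EuclideanSpace ℝ s := (EuclideanSpace.equiv s ℝ).symm.toLinearMap ∘ₗ
    LinearMap.pi fun ν => innerₗ E (e ν) ∘ₗ W.subtype
  have norm_sq_f : ∀ w, ‖f w‖ ^ 2 = ∑ ν ∈ s, ⟪e ν, w⟫ ^ 2 := fun w => by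
    simp [f, EuclideanSpace.real_norm_sq_eq, ← s.sum_coe_sort]
  have ker_f : LinearMap.ker f = ⊥ := by
    refine (Submodule.eq_bot_iff _).2 fun w hw => ?_
    have hW : W ≤ (ℝ ∙ (w : E))ᗮ := Submodule.span_le.2 <| by
      rintro _ ⟨ν, hν, rfl⟩
      simpa [f, Submodule.mem_orthogonal_singleton_iff_inner_left] using
        congrArg (· ⟨ν, hν⟩) (LinearMap.mem_ker.1 hw)
    exact Subtype.ext <| inner_self_eq_zero.1 <|
      Submodule.mem_orthogonal_singleton_iff_inner_left.1 (hW w.2)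
  obtain ⟨K, -, hK⟩ := f.exists_antilipschitzWith ker_f
  obtain ⟨c, hc, hcf⟩ := antilipschitzWith_iff_exists_mul_le_norm.mp ⟨K, hK⟩
  refine ⟨c ^ 2, by positivity, fun v hv => ?_⟩
  rw [← norm_sq_f ⟨v, hv⟩]
  simpa [mul_pow] using pow_le_pow_left₀ (by positivity) (hcf ⟨v, hv⟩) 2

open Matrix

namespace Matrix

theorem exists_pos_mul_sum_sq_le_sum_dotProduct_sq {m ι : Type*} [Fintype m]
    (e : ι → m → ℝ) (s : Finset ι) :
    ∃ C > 0, ∀ v ∈ Submodule.span ℝ (e '' s), C * ∑ i, v i ^ 2 ≤ ∑ ν ∈ s, (e ν ⬝ᵥ v) ^ 2 := by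
  let L := (WithLp.linearEquiv 2 ℝ (m → ℝ)).symm
  obtain ⟨C, hC, h⟩ := exists_pos_mul_norm_sq_le_sum_inner_sq (L ∘ e) s
  refine ⟨C, hC, fun v hv => ?_⟩
  have hLv : L v ∈ Submodule.span ℝ ((L ∘ e) '' s) := by
    rw [Set.image_comp]; exact Submodule.apply_mem_span_image_of_mem_span L.toLinearMap hv
  simpa [L, EuclideanSpace.real_norm_sq_eq, EuclideanSpace.inner_toLp_toLp, dotProduct_comm]
    using h _ hLv

variable {R : Type*} [CommSemiring R]

theorem dotProduct_submatrix_castSucc_mulVec {n : ℕ} (M : Matrix (Fin (n + 1)) (Fin (n + 1)) R)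
    (x : Fin n → R) :
    x ⬝ᵥ M.submatrix Fin.castSucc Fin.castSucc *ᵥ x
      = Fin.snoc x 0 ⬝ᵥ M *ᵥ Fin.snoc (α := fun _ => R) x 0 := by
  simp [dotProduct, mulVec, Fin.sum_univ_castSucc]

theorem dotProduct_transpose_mul_mul_mulVec {n : Type*} [Fintype n] (Q A : Matrix n n R)
    (y z : n → R) : y ⬝ᵥ (Qᵀ * A * Q) *ᵥ z = Q *ᵥ y ⬝ᵥ A *ᵥ Q *ᵥ z := by
  rw [← mulVec_mulVec, ← mulVec_mulVec, dotProduct_mulVec, vecMul_transpose]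

theorem dotProduct_mulVec_mulVec_of_transpose_mul_self {n : Type*} [Fintype n] [DecidableEq n]
    {Q : Matrix n n R} (hQ : Qᵀ * Q = 1) (y z : n → R) : Q *ᵥ y ⬝ᵥ Q *ᵥ z = y ⬝ᵥ z := by
  simpa [hQ] using (dotProduct_transpose_mul_mul_mulVec Q 1 y z).symm

theorem dotProduct_sum_smul_vecMulVec_mulVec {n ι : Type*} [Fintype n] [Fintype ι]
    (c : ι → R) (e : ι → n → R) (w : n → R) :
    w ⬝ᵥ (∑ ν, c ν • vecMulVec (e ν) (e ν)) *ᵥ w = ∑ ν, c ν * (e ν ⬝ᵥ w) ^ 2 := by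
  rw [sum_mulVec, dotProduct_sum]
  refine Finset.sum_congr rfl fun ν _ => ?_
  rw [smul_mulVec, vecMulVec_mulVec, dotProduct_smul, dotProduct_smul]
  simp [sq, dotProduct_comm w]

theorem sum_mulVec_eq_zero_of_col_eq_const {K n : Type*} [Field K] [Fintype n] [DecidableEq n]
    {Q : Matrix n n K} (hQ : Qᵀ * Q = 1) {j : n} {a : K} (ha : a ≠ 0) (hcol : ∀ i, Q i j = a)
    {y : n → K} (hy : y j = 0) : ∑ i, (Q *ᵥ y) i = 0 := by
  have h := dotProduct_mulVec_mulVec_of_transpose_mul_self hQ y (Pi.single j 1)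
  rw [mulVec_single_one, dotProduct_single_one, hy, show Q.col j = fun _ => a from funext hcol,
    dotProduct, ← Finset.sum_mul] at h
  exact (mul_eq_zero.1 h).resolve_right ha

end Matrix

theorem stmt3_general (n : ℕ) (T : ℝ) (ι : Type) [Fintype ι]
    (e : ι → Fin (n + 1) → ℝ)
    (c : ℝ → ι → ℝ) (hc : ∀ t ∈ Set.Icc (0 : ℝ) T, ∀ ν, 0 ≤ c t ν)
    (Δstar : Finset ι)
    (hspan : (Submodule.span ℝ (e '' (Δstar : Set ι)) : Set (Fin (n + 1) → ℝ)) =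
      {x : Fin (n + 1) → ℝ | ∑ i, x i = 0})
    (κ : ℝ) (hκ : 0 < κ)
    (hrate : ∀ ν ∈ Δstar, ∀ t ∈ Set.Icc (0 : ℝ) T, κ ≤ c t ν)
    (Q : Matrix (Fin (n + 1)) (Fin (n + 1)) ℝ)
    (hQorth : Q.transpose * Q = 1 ∧ Q * Q.transpose = 1)
    (hlast : ∀ i, Q i (Fin.last n) = 1 / Real.sqrt (n + 1)) :
    ∃ C : ℝ, 0 < C ∧ ∀ t ∈ Set.Icc (0 : ℝ) T, ∀ x : Fin n → ℝ,
      C * (∑ i, (x i) ^ 2) ≤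
        dotProduct x
          (((Q.transpose * (∑ ν, c t ν • Matrix.vecMulVec (e ν) (e ν)) * Q).submatrix
              Fin.castSucc Fin.castSucc).mulVec x) := by
  obtain ⟨C, hC, hframe⟩ := exists_pos_mul_sum_sq_le_sum_dotProduct_sq e Δstar
  refine ⟨κ * C, mul_pos hκ hC, fun t ht x => ?_⟩
  set v := Q *ᵥ Fin.snoc x 0
  have hv : v ∈ Submodule.span ℝ (e '' Δstar) := by
    rw [← SetLike.mem_coe, hspan]
    exact sum_mulVec_eq_zero_of_col_eq_const hQorth.1 (by positivity) hlast (Fin.snoc_last _ _)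
  have hvx : ∑ i, v i ^ 2 = ∑ i, x i ^ 2 := by
    simpa [dotProduct, Fin.sum_univ_castSucc, sq] using
      dotProduct_mulVec_mulVec_of_transpose_mul_self hQorth.1 (Fin.snoc x 0) (Fin.snoc x 0)
  rw [dotProduct_submatrix_castSucc_mulVec, dotProduct_transpose_mul_mul_mulVec,
    dotProduct_sum_smul_vecMulVec_mulVec, ← hvx]
  calc κ * C * ∑ i, v i ^ 2
      ≤ κ * ∑ ν ∈ Δstar, (e ν ⬝ᵥ v) ^ 2 := by rw [mul_assoc]; gcongr; exact hframe v hv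
    _ = ∑ ν ∈ Δstar, κ * (e ν ⬝ᵥ v) ^ 2 := Finset.mul_sum _ _ _
    _ ≤ ∑ ν ∈ Δstar, c t ν * (e ν ⬝ᵥ v) ^ 2 := by
        gcongr with ν hν; exact hrate ν hν t ht
    _ ≤ ∑ ν, c t ν * (e ν ⬝ᵥ v) ^ 2 :=
        Finset.sum_le_sum_of_subset_of_nonneg (Finset.subset_univ _)
          fun ν _ _ => mul_nonneg (hc t ht ν) (sq_nonneg _)

/-- Lemma 2.1 of the paper (uniform non-degeneracy of `α`). With `d = n+1`,
`a(t) = ∑_ν c(t,ν) e_ν e_ν'` where the rates `c(t,ν) = Γ^{k}(μ(t),ν)` are nonnegative and each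
`e_ν` sums to zero; a subset `Δ*` spans `V_{d-1}` and the rates over `Δ*` are uniformly bounded
below by `κ(T) > 0` on `[0,T]`. `Q` is orthogonal with last column `(1/√d)·1`, and `α(t)` is the
upper-left `(d-1)×(d-1)` block of `Q' a(t) Q`. Then there is `C(T) > 0` with
`x' α(t) x ≥ C(T) ‖x‖²` for all `x ∈ ℝ^{d-1}` and `t ∈ [0,T]`. -/
theorem stmt3 (n : ℕ) (T : ℝ) (hT : 0 < T) (ι : Type) [Fintype ι]
    (e : ι → Fin (n + 1) → ℝ) (he : ∀ ν, ∑ i, e ν i = 0)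
    (c : ℝ → ι → ℝ) (hc : ∀ t ∈ Set.Icc (0 : ℝ) T, ∀ ν, 0 ≤ c t ν)
    (Δstar : Finset ι)
    (hspan : (Submodule.span ℝ (e '' (Δstar : Set ι)) : Set (Fin (n + 1) → ℝ)) =
      {x : Fin (n + 1) → ℝ | ∑ i, x i = 0})
    (κ : ℝ) (hκ : 0 < κ)
    (hrate : ∀ ν ∈ Δstar, ∀ t ∈ Set.Icc (0 : ℝ) T, κ ≤ c t ν)
    (Q : Matrix (Fin (n + 1)) (Fin (n + 1)) ℝ)
    (hQorth : Q.transpose * Q = 1 ∧ Q * Q.transpose = 1)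
    (hlast : ∀ i, Q i (Fin.last n) = 1 / Real.sqrt (n + 1)) :
    ∃ C : ℝ, 0 < C ∧ ∀ t ∈ Set.Icc (0 : ℝ) T, ∀ x : Fin n → ℝ,
      C * (∑ i, (x i) ^ 2) ≤
        dotProduct x
          (((Q.transpose * (∑ ν, c t ν • Matrix.vecMulVec (e ν) (e ν)) * Q).submatrix
              Fin.castSucc Fin.castSucc).mulVec x) :=
  stmt3_general n T ι e c hc Δstar hspan κ hκ hrate Q hQorth hlast
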